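/- For each fixed t ∈ (0,1), the function s ↦ ṽ(t,s), where ṽ(t,s) = −(1/12)(2s+3(t−2)t) for 0 ≤ s ≤ t and ṽ(t,s) = (1/12)(t²/s²)(−3(s−2)s−2t) for t < s ≤ 1, is monotone decreasing in s on [0,1]; consequently min_{s∈[0,1]} ṽ(t,s) = ṽ(t,1) = (t²/12)(3−2t) and max_{s∈[0,1]} ṽ(t,s) = ṽ(t,0) = (1/4)t(2−t). -/
import Mathlib


/-- The continuous extension of `g(t,s)/s²`, where `g` is the Green's function of
`u ↦ u''''` on `[0,1]` with boundary conditions `u(0)=u'(0)=u'(1)=u'''(1)=0`. -/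
noncomputable def vTilde (t s : ℝ) : ℝ :=
  if s ≤ t then -(1/12) * (2*s + 3*(t - 2)*t)
  else (1/12) * (t^2 / s^2) * (-3*(s - 2)*s - 2*t)

lemma vTilde_anti (t : ℝ) (ht : t ∈ Set.Ioo (0 : ℝ) 1) :
    AntitoneOn (fun s => vTilde t s) (Set.Icc 0 1) := by
  obtain ⟨ht0, ht1⟩ := ht
  intro a ha b hb hab
  simp only [vTilde]
  rcases le_or_gt b t with hbt | htb
  · rw [if_pos (hab.trans hbt), if_pos hbt]
    nlinarith
  · rw [if_neg (not_le.mpr htb)]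
    have hb0 : (0:ℝ) < b := ht0.trans htb
    rcases le_or_gt a t with hat | hta
    · rw [if_pos hat]
      rw [show (1:ℝ)/12 * (t^2 / b^2) * (-3*(b - 2)*b - 2*t)
          = (1/12 * t^2 * (-3*(b - 2)*b - 2*t)) / b^2 by ring,
        div_le_iff₀ (by positivity)]
      nlinarith [mul_nonneg (mul_pos ht0 (sub_pos.mpr htb)).le
          (by nlinarith : (0:ℝ) ≤ 2*b - t),
        mul_nonneg (mul_nonneg ht0.le (sub_nonneg.mpr hat)) (sq_nonneg b),
        mul_nonneg (mul_nonneg (sub_nonneg.mpr ht1.le) ht0.le) hb0.le]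
    · rw [if_neg (not_le.mpr hta)]
      have ha0 : (0:ℝ) < a := ht0.trans hta
      rw [show (1:ℝ)/12 * (t^2 / b^2) * (-3*(b - 2)*b - 2*t)
          = (1/12 * t^2 * (-3*(b - 2)*b - 2*t)) / b^2 by ring,
        show (1:ℝ)/12 * (t^2 / a^2) * (-3*(a - 2)*a - 2*t)
          = (1/12 * t^2 * (-3*(a - 2)*a - 2*t)) / a^2 by ring,
        div_le_div_iff₀ (by positivity) (by positivity)]
      nlinarith [mul_nonneg (mul_nonneg (sub_nonneg.mpr hab)
        (by nlinarith : (0:ℝ) ≤ 3*a*b - t*(a+b))) (sq_nonneg t)]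

/-- For each fixed `t ∈ (0,1)`, the function `s ↦ ṽ(t,s)` is monotone
decreasing on `[0,1]`; consequently its minimum over `[0,1]` is
`ṽ(t,1) = (t²/12)(3-2t)` and its maximum is `ṽ(t,0) = (1/4)t(2-t)`. -/
theorem stmt12 (t : ℝ) (ht : t ∈ Set.Ioo (0 : ℝ) 1) :
    AntitoneOn (fun s => vTilde t s) (Set.Icc 0 1) ∧
    vTilde t 1 = t^2 / 12 * (3 - 2*t) ∧
    vTilde t 0 = 1/4 * t * (2 - t) ∧
    ∀ s ∈ Set.Icc (0 : ℝ) 1, vTilde t 1 ≤ vTilde t s ∧ vTilde t s ≤ vTilde t 0 := by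
  obtain ⟨ht0, ht1⟩ := ht
  have anti := vTilde_anti t ⟨ht0, ht1⟩
  refine ⟨anti, ?_, ?_, ?_⟩
  · rw [vTilde, if_neg (not_le.mpr ht1)]; ring
  · rw [vTilde, if_pos ht0.le]; ring
  · intro s hs
    exact ⟨anti hs (by norm_num) hs.2, anti (by norm_num) hs hs.1⟩
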